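/- Let A ∈ [0,1]^{n×m}, b ∈ [0,1]^n, Δ the Chebyshev distance of b, and η = Aᵗ ⊡_→ F(b̄(Δ)). Then A ⊡ η = F(b̄(Δ)), η is an approximate solution (i.e., ‖A ⊡ η - b‖_∞ = Δ), and every x ∈ [0,1]^m with ‖A ⊡ x - b‖_∞ = Δ satisfies x ≤ η componentwise. -/

import Mathlib

noncomputable def godel (x y : ℝ) : ℝ := if x ≤ y then 1 else y

noncomputable def maxMin {n m : ℕ} [NeZero m] (A : Fin n → Fin m → ℝ) (x : Fin m → ℝ) :
    Fin n → ℝ :=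
  fun i => Finset.univ.sup' Finset.univ_nonempty (fun j => min (A i j) (x j))

noncomputable def godelComp {n m : ℕ} [NeZero n] (A : Fin n → Fin m → ℝ) (c : Fin n → ℝ) :
    Fin m → ℝ :=
  fun j => Finset.univ.inf' Finset.univ_nonempty (fun i => godel (A i j) (c i))

noncomputable def Fmap {n m : ℕ} [NeZero n] [NeZero m] (A : Fin n → Fin m → ℝ)
    (c : Fin n → ℝ) : Fin n → ℝ :=
  maxMin A (godelComp A c)

noncomputable def chebNorm {n : ℕ} [NeZero n] (b c : Fin n → ℝ) : ℝ :=
  Finset.univ.sup' Finset.univ_nonempty (fun i => |b i - c i|)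

/-!
`x ↦ A ⊡ x` and `c ↦ Aᵗ ⊡_→ c` form a Galois connection on vectors bounded by `1`, so
`A ⊡ x ≤ c` forces `A ⊡ x ≤ F(c)` and `x ≤ Aᵗ ⊡_→ F(c)`. By compactness of `[0,1]^m` the
Chebyshev distance `Δ` is attained at some `x*`. Every `x` with `‖b - A ⊡ x‖_∞ ≤ Δ` satisfies
`A ⊡ x ≤ b̄(Δ)`, and for `x = x*` this gives `b - Δ ≤ A ⊡ x* ≤ F(b̄(Δ)) ≤ b̄(Δ) ≤ b + Δ`.
-/

lemma min_godel_le (a c : ℝ) : min a (godel a c) ≤ c := by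
  unfold godel
  split_ifs with hac
  exacts [(min_le_left _ _).trans hac, min_le_right _ _]

lemma le_godel_of_min_le {a x c : ℝ} (hx : x ≤ 1) (h : min a x ≤ c) : x ≤ godel a c := by
  unfold godel
  split_ifs with hac
  · exact hx
  · exact (min_le_iff.mp h).resolve_left hac

lemma godel_nonneg (a : ℝ) {c : ℝ} (hc : 0 ≤ c) : 0 ≤ godel a c := by
  unfold godel
  split_ifs
  exacts [zero_le_one, hc]

lemma godel_le_one (a : ℝ) {c : ℝ} (hc : c ≤ 1) : godel a c ≤ 1 := by
  unfold godel
  split_ifs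
  exacts [le_rfl, hc]

section MaxMin

variable {n m : ℕ} {A : Fin n → Fin m → ℝ}

lemma maxMin_mono [NeZero m] : Monotone (maxMin A) := fun _ _ hxy _ =>
  Finset.sup'_mono_fun fun j _ => min_le_min_left _ (hxy j)

lemma continuous_maxMin [NeZero m] : Continuous (maxMin A) :=
  continuous_pi fun _ => Continuous.finset_sup'_apply _ fun j _ =>
    continuous_const.min (continuous_apply j)

lemma maxMin_le_one [NeZero m] {x : Fin m → ℝ} (hx : x ≤ 1) : maxMin A x ≤ 1 := fun _ =>
  Finset.sup'_le Finset.univ_nonempty _ fun j _ => (min_le_right _ _).trans (hx j)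

lemma godelComp_le_one [NeZero n] {c : Fin n → ℝ} (hc : c ≤ 1) : godelComp A c ≤ 1 := fun _ =>
  (Finset.inf'_le _ (Finset.mem_univ 0)).trans (godel_le_one _ (hc 0))

lemma godelComp_mem_Icc [NeZero n] {c : Fin n → ℝ} (hc : ∀ i, c i ∈ Set.Icc (0 : ℝ) 1)
    (j : Fin m) : godelComp A c j ∈ Set.Icc (0 : ℝ) 1 :=
  ⟨Finset.le_inf' _ _ fun i _ => godel_nonneg _ (hc i).1,
    godelComp_le_one (fun i => (hc i).2) j⟩

lemma Fmap_le [NeZero n] [NeZero m] (c : Fin n → ℝ) : Fmap A c ≤ c := fun i =>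
  Finset.sup'_le Finset.univ_nonempty _ fun _ _ =>
    (min_le_min_left _ (Finset.inf'_le _ (Finset.mem_univ i))).trans (min_godel_le _ _)

lemma le_godelComp_of_maxMin_le [NeZero n] [NeZero m] {x : Fin m → ℝ} {c : Fin n → ℝ}
    (hx : x ≤ 1) (h : maxMin A x ≤ c) : x ≤ godelComp A c := fun j =>
  Finset.le_inf' _ _ fun i _ =>
    le_godel_of_min_le (hx j) ((Finset.le_sup' (fun j => min (A i j) (x j))
      (Finset.mem_univ j)).trans (h i))

lemma maxMin_le_Fmap [NeZero n] [NeZero m] {x : Fin m → ℝ} {c : Fin n → ℝ} (hx : x ≤ 1)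
    (h : maxMin A x ≤ c) : maxMin A x ≤ Fmap A c :=
  maxMin_mono (le_godelComp_of_maxMin_le hx h)

lemma Fmap_Fmap [NeZero n] [NeZero m] {c : Fin n → ℝ} (hc : c ≤ 1) :
    Fmap A (Fmap A c) = Fmap A c :=
  (Fmap_le _).antisymm (maxMin_le_Fmap (godelComp_le_one hc) le_rfl)

end MaxMin

section Chebyshev

variable {n : ℕ} [NeZero n]

lemma abs_sub_le_chebNorm (b c : Fin n → ℝ) (i : Fin n) : |b i - c i| ≤ chebNorm b c :=
  Finset.le_sup' (fun i => |b i - c i|) (Finset.mem_univ i)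

lemma chebNorm_le_iff {b c : Fin n → ℝ} {d : ℝ} : chebNorm b c ≤ d ↔ ∀ i, |b i - c i| ≤ d := by
  simp [chebNorm, Finset.sup'_le_iff]

lemma continuous_chebNorm (b : Fin n → ℝ) : Continuous (chebNorm b) :=
  Continuous.finset_sup'_apply _ fun i _ => (continuous_const.sub (continuous_apply i)).abs

lemma chebNorm_nonneg (b c : Fin n → ℝ) : 0 ≤ chebNorm b c :=
  (abs_nonneg _).trans (abs_sub_le_chebNorm b c 0)

end Chebyshev

section ChebyshevApproximation

variable {n m : ℕ} [NeZero n] [NeZero m] {A : Fin n → Fin m → ℝ} {b : Fin n → ℝ}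

lemma maxMin_le_of_chebNorm_le {x : Fin m → ℝ} {δ : ℝ} (hx : x ≤ 1)
    (h : chebNorm b (maxMin A x) ≤ δ) : maxMin A x ≤ fun k => min (b k + δ) 1 := fun i =>
  le_min (by linarith [(abs_sub_le_iff.1 (chebNorm_le_iff.1 h i)).2]) (maxMin_le_one hx i)

variable (A b) in
lemma exists_isLeast_chebNorm_maxMin : ∃ x : Fin m → ℝ, (∀ j, x j ∈ Set.Icc (0 : ℝ) 1) ∧
    IsLeast {d : ℝ | ∃ x : Fin m → ℝ, (∀ j, x j ∈ Set.Icc (0 : ℝ) 1) ∧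
      d = chebNorm b (maxMin A x)} (chebNorm b (maxMin A x)) := by
  obtain ⟨x, hx, hmin⟩ := (isCompact_univ_pi fun _ => isCompact_Icc).exists_isMinOn
    ⟨0, Set.mem_univ_pi.2 fun _ => ⟨le_rfl, zero_le_one⟩⟩
    ((continuous_chebNorm b).comp (continuous_maxMin (A := A))).continuousOn
  rw [Set.mem_univ_pi] at hx
  refine ⟨x, hx, ⟨x, hx, rfl⟩, ?_⟩
  rintro _ ⟨y, hy, rfl⟩
  exact hmin (Set.mem_univ_pi.2 hy)

end ChebyshevApproximation

theorem stmt14_general {n m : ℕ} [NeZero n] [NeZero m] (A : Fin n → Fin m → ℝ)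
    (b : Fin n → ℝ) (hb : ∀ i, b i ∈ Set.Icc (0:ℝ) 1)
    (Δ : ℝ)
    (hΔ : Δ = sInf {d : ℝ | ∃ x : Fin m → ℝ, (∀ j, x j ∈ Set.Icc (0:ℝ) 1) ∧
        d = chebNorm b (maxMin A x)}) :
    maxMin A (godelComp A (Fmap A (fun k => min (b k + Δ) 1)))
        = Fmap A (fun k => min (b k + Δ) 1) ∧
      chebNorm b (maxMin A (godelComp A (Fmap A (fun k => min (b k + Δ) 1)))) = Δ ∧
      ∀ x : Fin m → ℝ, (∀ j, x j ∈ Set.Icc (0:ℝ) 1) →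
        chebNorm b (maxMin A x) = Δ →
        x ≤ godelComp A (Fmap A (fun k => min (b k + Δ) 1)) := by
  obtain ⟨xs, hxs, hleast⟩ := exists_isLeast_chebNorm_maxMin A b
  have hΔxs : Δ = chebNorm b (maxMin A xs) := hΔ.trans hleast.csInf_eq
  have hΔ0 : 0 ≤ Δ := hΔxs ▸ chebNorm_nonneg _ _
  set c : Fin n → ℝ := fun k => min (b k + Δ) 1
  have below_Fmap (x : Fin m → ℝ) (hx : ∀ j, x j ∈ Set.Icc (0 : ℝ) 1)
      (h : chebNorm b (maxMin A x) ≤ Δ) : maxMin A x ≤ Fmap A c :=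
    maxMin_le_Fmap (fun j => (hx j).2) (maxMin_le_of_chebNorm_le (fun j => (hx j).2) h)
  have idem : maxMin A (godelComp A (Fmap A c)) = Fmap A c :=
    Fmap_Fmap fun _ => min_le_right _ _
  refine ⟨idem, ?_, fun x hx h =>
    le_godelComp_of_maxMin_le (fun j => (hx j).2) (below_Fmap x hx h.le)⟩
  rw [idem]
  refine le_antisymm (chebNorm_le_iff.2 fun i => abs_sub_le_iff.2 ⟨?_, ?_⟩) ?_
  · have hxs_i := (abs_sub_le_iff.1 (abs_sub_le_chebNorm b (maxMin A xs) i)).1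
    linarith [below_Fmap xs hxs hΔxs.ge i]
  · linarith [Fmap_le (A := A) c i, min_le_left (b i + Δ) 1]
  · have hc : ∀ i, c i ∈ Set.Icc (0 : ℝ) 1 :=
      fun i => ⟨le_min (add_nonneg (hb i).1 hΔ0) zero_le_one, min_le_right _ _⟩
    exact hΔxs ▸ hleast.2 ⟨godelComp A c, godelComp_mem_Icc hc, rfl⟩

theorem stmt14 {n m : ℕ} [NeZero n] [NeZero m] (A : Fin n → Fin m → ℝ)
    (hA : ∀ i j, A i j ∈ Set.Icc (0:ℝ) 1)
    (b : Fin n → ℝ) (hb : ∀ i, b i ∈ Set.Icc (0:ℝ) 1)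
    (Δ : ℝ)
    (hΔ : Δ = sInf {d : ℝ | ∃ x : Fin m → ℝ, (∀ j, x j ∈ Set.Icc (0:ℝ) 1) ∧
        d = chebNorm b (maxMin A x)}) :
    maxMin A (godelComp A (Fmap A (fun k => min (b k + Δ) 1)))
        = Fmap A (fun k => min (b k + Δ) 1) ∧
      chebNorm b (maxMin A (godelComp A (Fmap A (fun k => min (b k + Δ) 1)))) = Δ ∧
      ∀ x : Fin m → ℝ, (∀ j, x j ∈ Set.Icc (0:ℝ) 1) →
        chebNorm b (maxMin A x) = Δ →
        x ≤ godelComp A (Fmap A (fun k => min (b k + Δ) 1)) :=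
  stmt14_general A b hb Δ hΔ
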